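/- arXiv:2307.04912 — 2 statements merged into one kernel-verified Lean document; each statement's English description precedes it below -/
import Mathlib

section
/- For every nonzero rational number y, the set {x ∈ ℚ : D_p(x) = y} of anti-partial derivatives of y is finite. -/
/-- Arithmetic partial derivative with respect to the prime `p`. -/
noncomputable def Dp (p : ℕ) (x : ℚ) : ℚ :=
  if x = 0 then 0 else x * (padicValRat p x : ℚ) / p

/-!
If `D_p(x) = y ≠ 0`, then `n := ν_p(x)` is a nonzero integer, `x = y p / n`, and taking valuations
gives `n + ν_p(n) = ν_p(y) + 1`. Since `2 ν_p(n) ≤ p ^ ν_p(n) ≤ |n|`, this equation bounds `|n|`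
by `2 |ν_p(y) + 1|`, so `x` ranges over finitely many values `y p / n`.
-/

lemma Nat.two_mul_le_two_pow (n : ℕ) : 2 * n ≤ 2 ^ n := by
  induction n with
  | zero => simp
  | succ k ih =>
    have : 1 ≤ 2 ^ k := Nat.one_le_two_pow
    rw [pow_succ]
    omega

section padicValInt

variable {p : ℕ}

lemma two_mul_padicValInt_le_natAbs (hp : 1 < p) (n : ℤ) : 2 * padicValInt p n ≤ n.natAbs := by
  rcases eq_or_ne n 0 with rfl | hn
  · simp
  calc 2 * padicValInt p n ≤ 2 ^ padicValInt p n := Nat.two_mul_le_two_pow _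
    _ ≤ p ^ padicValInt p n := Nat.pow_le_pow_left hp _
    _ ≤ n.natAbs := Nat.le_of_dvd (Int.natAbs_pos.mpr hn) pow_padicValNat_dvd

lemma natAbs_le_of_add_padicValInt_eq (hp : 1 < p) {n m : ℤ} (h : n + padicValInt p n = m) :
    n.natAbs ≤ 2 * m.natAbs := by
  have := two_mul_padicValInt_le_natAbs hp n
  omega

lemma finite_setOf_add_padicValInt_eq (hp : 1 < p) (m : ℤ) :
    {n : ℤ | n + padicValInt p n = m}.Finite := by
  refine (Set.finite_Icc (-(2 * m.natAbs : ℤ)) (2 * m.natAbs)).subset fun n hn => ?_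
  have := natAbs_le_of_add_padicValInt_eq hp hn
  simp only [Set.mem_Icc]
  omega

end padicValInt

namespace Dp

variable {p : ℕ} {x : ℚ}

lemma of_ne_zero (hx : x ≠ 0) : Dp p x = x * padicValRat p x / p := if_neg hx

lemma ne_zero_and_padicValRat_ne_zero (h : Dp p x ≠ 0) : x ≠ 0 ∧ padicValRat p x ≠ 0 := by
  refine ⟨fun hx => h (if_pos hx), fun hv => h ?_⟩
  unfold Dp
  simp [hv]

lemma eq_mul_div_padicValRat (hp : p ≠ 0) (h : Dp p x ≠ 0) :
    x = Dp p x * p / padicValRat p x := by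
  obtain ⟨hx, hv⟩ := ne_zero_and_padicValRat_ne_zero h
  rw [of_ne_zero hx]
  field_simp

lemma padicValRat_eq [Fact p.Prime] (h : Dp p x ≠ 0) :
    padicValRat p (Dp p x) = padicValRat p x + padicValInt p (padicValRat p x) - 1 := by
  obtain ⟨hx, hv⟩ := ne_zero_and_padicValRat_ne_zero h
  have hv' : ((padicValRat p x : ℤ) : ℚ) ≠ 0 := Int.cast_ne_zero.mpr hv
  have hp : (p : ℚ) ≠ 0 := Nat.cast_ne_zero.mpr (Fact.out : p.Prime).ne_zero
  rw [of_ne_zero hx, padicValRat.div (mul_ne_zero hx hv') hp, padicValRat.mul hx hv',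
    padicValRat.of_int, padicValRat.self (Fact.out : p.Prime).one_lt]

end Dp

theorem antiderivatives_finite (p : ℕ) (hp : p.Prime) (y : ℚ) (hy : y ≠ 0) :
    {x : ℚ | Dp p x = y}.Finite := by
  have : Fact p.Prime := ⟨hp⟩
  refine ((finite_setOf_add_padicValInt_eq hp.one_lt (padicValRat p y + 1)).image
    fun n : ℤ => y * p / n).subset ?_
  rintro x (rfl : Dp p x = y)
  refine ⟨padicValRat p x, ?_, (Dp.eq_mul_div_padicValRat hp.ne_zero hy).symm⟩
  rw [Set.mem_ofPred_eq, Dp.padicValRat_eq hy]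
  ring
end

section
/- For every nonzero rational x, the arithmetic partial derivative D_p is strictly differentiable at x with respect to the p-adic absolute value, with derivative ν_p(x)/p: the difference quotients (D_p(u) - D_p(v))/(u - v) tend to ν_p(x)/p as (u,v) → (x,x) with u ≠ v. -/
namespace padicNorm

variable {p : ℕ} [Fact p.Prime]

theorem eq_of_sub_lt {u x : ℚ} (h : padicNorm p (u - x) < padicNorm p x) :
    padicNorm p u = padicNorm p x := by
  rw [← sub_add_cancel u x, add_eq_max_of_ne h.ne, max_eq_right h.le]

theorem padicValRat_eq_of_eq {q r : ℚ} (hq : q ≠ 0) (hr : r ≠ 0)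
    (h : padicNorm p q = padicNorm p r) : padicValRat p q = padicValRat p r := by
  rw [padicNorm.eq_zpow_of_nonzero hq, padicNorm.eq_zpow_of_nonzero hr] at h
  have hp : (1 : ℚ) < p := mod_cast (Fact.out : p.Prime).one_lt
  exact neg_injective (zpow_right_injective₀ (by positivity) hp.ne' h)

theorem padicValRat_eq_of_sub_lt {u x : ℚ} (hx : x ≠ 0)
    (h : padicNorm p (u - x) < padicNorm p x) : padicValRat p u = padicValRat p x := by
  have hnorm := eq_of_sub_lt h
  have hu : u ≠ 0 := fun hu => padicNorm.nonzero hx (by rw [← hnorm, hu, padicNorm.zero])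
  exact padicValRat_eq_of_eq hu hx hnorm

end padicNorm

theorem Dp_eq_mul_padicValRat (p : ℕ) (x : ℚ) : Dp p x = x * padicValRat p x / p := by
  unfold Dp
  split_ifs with hx <;> simp [hx]

theorem Dp_sub_div_sub_of_padicValRat_eq (p : ℕ) {u v : ℚ} (huv : u ≠ v)
    (h : padicValRat p u = padicValRat p v) :
    (Dp p u - Dp p v) / (u - v) = padicValRat p u / p := by
  rw [Dp_eq_mul_padicValRat, Dp_eq_mul_padicValRat, ← h, ← sub_div, ← sub_mul, mul_div_assoc,
    mul_div_cancel_left₀ _ (sub_ne_zero.mpr huv)]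

theorem dp_strictly_differentiable (p : ℕ) (hp : p.Prime) (x : ℚ) (hx : x ≠ 0) :
    ∀ ε : ℚ, 0 < ε → ∃ δ : ℚ, 0 < δ ∧
      ∀ u v : ℚ, u ≠ v → padicNorm p (u - x) < δ → padicNorm p (v - x) < δ →
        padicNorm p ((Dp p u - Dp p v) / (u - v) - (padicValRat p x : ℚ) / p) < ε := by
  have : Fact p.Prime := ⟨hp⟩
  intro ε hε
  refine ⟨padicNorm p x, (padicNorm.nonneg x).lt_of_ne (padicNorm.nonzero hx).symm, ?_⟩
  intro u v huv hu hv
  have hvalu := padicNorm.padicValRat_eq_of_sub_lt hx hu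
  have hvalv := padicNorm.padicValRat_eq_of_sub_lt hx hv
  rw [Dp_sub_div_sub_of_padicValRat_eq p huv (hvalu.trans hvalv.symm), hvalu, sub_self,
    padicNorm.zero]
  exact hε
end
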